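/- Let λ > 0, t0 > 0, and let z : [t0, ∞) → H be a continuously differentiable curve such that v(t) := ∇f(z(t)) is differentiable on [t0, ∞) and the regularized Newton system λ·ż(t) + v̇(t) + v(t) = 0 holds for all t ≥ t0. Then ∫_{t0}^∞ (f(z(t)) − inf_H f) dt < ∞, and f(z(t)) − inf_H f = o(1/t) as t → ∞, i.e., t·(f(z(t)) − inf_H f) → 0 as t → ∞. -/

import Mathlib

open MeasureTheory Filter Set
open scoped Topology RealInnerProductSpace

/-!
Let `x₀` minimize `f` and `φ = f ∘ z - f x₀`. Monotonicity of `∇f` gives `⟪v̇, ż⟫ ≥ 0`, so by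
the equation `φ' = ⟪∇f(z), ż⟫ = -λ‖ż‖² - ⟪v̇, ż⟫ ≤ 0`. By the gradient inequality
`φ ≤ ⟪∇f(z), z - x₀⟫`, the energy `E = λ/2 ‖z - x₀‖² + ⟪∇f(z), z - x₀⟫` is nonnegative, and
the equation gives `E' = φ' - ⟪∇f(z), z - x₀⟫ ≤ -φ`; hence `∫ φ ≤ E(t₀)`. Finally a
nonnegative, nonincreasing integrable `φ` satisfies `(t/2) φ(t) ≤ ∫_{t/2}^t φ → 0`.
-/

section Gradient

variable {H : Type*} [NormedAddCommGroup H] [InnerProductSpace ℝ H]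

theorem inner_deriv_nonneg_of_inner_sub_nonneg {u w : ℝ → H} {u' w' : H} {t : ℝ}
    (hu : HasDerivAt u u' t) (hw : HasDerivAt w w' t)
    (hmono : ∀ s, 0 ≤ ⟪u s - u t, w s - w t⟫) : 0 ≤ ⟪u', w'⟫ := by
  refine ge_of_tendsto ((hasDerivAt_iff_tendsto_slope.mp hu).inner
    (hasDerivAt_iff_tendsto_slope.mp hw)) (Eventually.of_forall fun s => ?_)
  rw [slope_def_module, slope_def_module, real_inner_smul_left, real_inner_smul_right,
    ← mul_assoc]
  exact mul_nonneg (mul_self_nonneg _) (hmono s)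

variable [CompleteSpace H] {f : H → ℝ} {g : H}

theorem HasGradientAt.comp_hasDerivAt {z : ℝ → H} {z' : H} {t : ℝ}
    (hf : HasGradientAt f g (z t)) (hz : HasDerivAt z z' t) :
    HasDerivAt (fun u => f (z u)) ⟪g, z'⟫ t := by
  have h := hf.hasFDerivAt.comp_hasDerivAt t hz
  simpa [Function.comp_def, InnerProductSpace.toDual_apply_apply] using h

theorem ConvexOn.sub_le_inner_of_hasGradientAt {s : Set H} {x y : H} (hf : ConvexOn ℝ s f)
    (hx : x ∈ s) (hy : y ∈ s) (hg : HasGradientAt f g x) : f x - f y ≤ ⟪g, x - y⟫ := by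
  let ℓ : ℝ →ᵃ[ℝ] H := AffineMap.lineMap x y
  have hℓ0 : ℓ 0 = x := AffineMap.lineMap_apply_zero x y
  have hℓ1 : ℓ 1 = y := AffineMap.lineMap_apply_one x y
  have hℓ : HasDerivAt ℓ (y - x) 0 := by
    rw [show ⇑ℓ = fun c : ℝ => c • (y - x) + x from funext (AffineMap.lineMap_apply_module' x y)]
    simpa using ((hasDerivAt_id (0 : ℝ)).smul_const (y - x)).add_const x
  have hslope := (hf.comp_affineMap ℓ).le_slope_of_hasDerivAt
    (show (0 : ℝ) ∈ ℓ ⁻¹' s by rwa [mem_preimage, hℓ0])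
    (show (1 : ℝ) ∈ ℓ ⁻¹' s by rwa [mem_preimage, hℓ1]) one_pos
    ((show HasGradientAt f g (ℓ 0) by rwa [hℓ0]).comp_hasDerivAt hℓ)
  rw [slope_def_field, Function.comp_apply, Function.comp_apply, hℓ0, hℓ1] at hslope
  rw [← neg_sub y x, inner_neg_right]
  linarith

theorem ConvexOn.inner_sub_sub_nonneg_of_hasGradientAt {s : Set H} {x y gy : H}
    (hf : ConvexOn ℝ s f) (hx : x ∈ s) (hy : y ∈ s) (hgx : HasGradientAt f g x)
    (hgy : HasGradientAt f gy y) : 0 ≤ ⟪g - gy, x - y⟫ := by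
  have h₁ := hf.sub_le_inner_of_hasGradientAt hx hy hgx
  have h₂ := hf.sub_le_inner_of_hasGradientAt hy hx hgy
  rw [← neg_sub x y, inner_neg_right] at h₂
  rw [inner_sub_left]
  linarith

end Gradient

theorem integrableOn_Ici_of_le_neg_deriv {φ W W' : ℝ → ℝ} {a : ℝ}
    (hφ : ContinuousOn φ (Ici a)) (hφ₀ : ∀ t ∈ Ici a, 0 ≤ φ t)
    (hW : ∀ t ∈ Ici a, HasDerivAt W (W' t) t) (hW₀ : ∀ t ∈ Ici a, 0 ≤ W t)
    (hle : ∀ t ∈ Ici a, φ t ≤ -W' t) : IntegrableOn φ (Ici a) := by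
  have hbound : ∀ T ∈ Ici a, ∫ t in a..T, ‖φ t‖ ≤ W a := by
    intro T hT
    have hIcc : Icc a T ⊆ Ici a := Icc_subset_Ici_self
    have h := intervalIntegral.integral_le_sub_of_hasDeriv_right_of_le (g := fun t => -W t) hT
      (fun t ht => (hW t (hIcc ht)).continuousAt.continuousWithinAt.neg)
      (fun t ht => (hW t (hIcc (Ioo_subset_Icc_self ht))).neg.hasDerivWithinAt)
      ((hφ.mono hIcc).integrableOn_Icc) (fun t ht => hle t (hIcc (Ioo_subset_Icc_self ht)))
    rw [intervalIntegral.integral_congr fun t ht => Real.norm_of_nonneg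
      (hφ₀ t (hIcc (by rwa [uIcc_of_le hT] at ht)))]
    linarith [hW₀ T hT]
  refine (integrableOn_Ici_iff_integrableOn_Ioi).2 <|
    integrableOn_Ioi_of_intervalIntegral_norm_bounded (W a) a (fun T => ?_) tendsto_id
      (eventually_ge_atTop a |>.mono hbound)
  rcases le_total T a with hT | hT
  · simp [Ioc_eq_empty_of_le hT]
  · exact ((hφ.mono Icc_subset_Ici_self).integrableOn_Icc).mono_set Ioc_subset_Icc_self

theorem AntitoneOn.tendsto_mul_zero_of_integrableOn {φ : ℝ → ℝ} {a : ℝ}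
    (hanti : AntitoneOn φ (Ici a)) (hφ₀ : ∀ t ∈ Ici a, 0 ≤ φ t)
    (hint : IntegrableOn φ (Ici a)) : Tendsto (fun t => t * φ t) atTop (𝓝 0) := by
  have htail : Tendsto (fun t => 2 * ∫ s in Ioi (t / 2), φ s) atTop (𝓝 0) := by
    simpa using (tendsto_integral_Ioi_zero (f := φ) (μ := volume)
      (tendsto_id.atTop_div_const two_pos)).const_mul 2
  refine squeeze_zero' ?_ ?_ htail
  · filter_upwards [eventually_ge_atTop (max 0 a)] with t ht
    exact mul_nonneg (le_of_max_le_left ht) (hφ₀ t (le_of_max_le_right ht))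
  · filter_upwards [eventually_ge_atTop (max 0 (2 * a))] with t ht
    have ht₀ : 0 ≤ t := le_of_max_le_left ht
    have hsub : Ioi (t / 2) ⊆ Ici a := fun s hs =>
      mem_Ici.2 (by linarith [le_of_max_le_right ht, mem_Ioi.1 hs])
    have hmid : φ t * (t / 2) ≤ ∫ s in Ioc (t / 2) t, φ s := by
      have h := setIntegral_ge_of_const_le_real (c := φ t) measurableSet_Ioc
        measure_Ioc_lt_top.ne
        (fun s hs => hanti (hsub hs.1) (hsub (hs.1.trans_le hs.2)) hs.2)
        (hint.mono_set (Ioc_subset_Ioi_self.trans hsub))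
      rwa [Real.volume_real_Ioc_of_le (by linarith), show t - t / 2 = t / 2 by ring] at h
    have htail_le : ∫ s in Ioc (t / 2) t, φ s ≤ ∫ s in Ioi (t / 2), φ s :=
      setIntegral_mono_set (hint.mono_set hsub)
        ((ae_restrict_iff' measurableSet_Ioi).2 (Eventually.of_forall fun s hs => hφ₀ s (hsub hs)))
        Ioc_subset_Ioi_self.eventuallyLE
    linarith

section RegularizedNewton

variable {H : Type*} [NormedAddCommGroup H] [InnerProductSpace ℝ H]

noncomputable def regularizedNewtonEnergy (lam : ℝ) (f' : H → H) (z : ℝ → H) (x₀ : H)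
    (t : ℝ) : ℝ :=
  lam / 2 * ‖z t - x₀‖ ^ 2 + ⟪f' (z t), z t - x₀⟫

variable {f' : H → H} {lam t : ℝ} {z : ℝ → H} {x' v' : H}

theorem hasDerivAt_regularizedNewtonEnergy (x₀ : H) (hz : HasDerivAt z x' t)
    (hv : HasDerivAt (fun u => f' (z u)) v' t) (heq : lam • x' + v' + f' (z t) = 0) :
    HasDerivAt (regularizedNewtonEnergy lam f' z x₀)
      (⟪f' (z t), x'⟫ - ⟪f' (z t), z t - x₀⟫) t := by
  have hz₀ : HasDerivAt (fun u => z u - x₀) x' t := hz.sub_const x₀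
  refine (((hz₀.norm_sq).const_mul (lam / 2)).add (hv.inner ℝ hz₀)).congr_deriv ?_
  have hv' : v' = -(lam • x') - f' (z t) := by rw [← sub_eq_zero, ← heq]; abel
  rw [hv', real_inner_comm x' (z t - x₀), inner_sub_left (-(lam • x')), inner_neg_left,
    real_inner_smul_left]
  ring

variable [CompleteSpace H] {f : H → ℝ}

theorem inner_gradient_deriv_nonpos_of_regularizedNewton (hconv : ConvexOn ℝ univ f)
    (hgrad : ∀ x, HasGradientAt f (f' x) x) (hlam : 0 ≤ lam)
    (hz : HasDerivAt z x' t) (hv : HasDerivAt (fun u => f' (z u)) v' t)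
    (heq : lam • x' + v' + f' (z t) = 0) : ⟪f' (z t), x'⟫ ≤ 0 := by
  have hmono : 0 ≤ ⟪v', x'⟫ := inner_deriv_nonneg_of_inner_sub_nonneg hv hz fun _ =>
    hconv.inner_sub_sub_nonneg_of_hasGradientAt (mem_univ _) (mem_univ _) (hgrad _) (hgrad _)
  have hf' : f' (z t) = -(lam • x') - v' := by rw [← sub_eq_zero, ← heq]; abel
  rw [hf', inner_sub_left, inner_neg_left, real_inner_smul_left, real_inner_self_eq_norm_sq]
  nlinarith [mul_nonneg hlam (sq_nonneg ‖x'‖)]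

theorem regularizedNewtonEnergy_nonneg {x₀ : H} (hconv : ConvexOn ℝ univ f)
    (hgrad : ∀ x, HasGradientAt f (f' x) x) (hlam : 0 ≤ lam) (hx₀ : ∀ y, f x₀ ≤ f y) :
    0 ≤ regularizedNewtonEnergy lam f' z x₀ t := by
  have h := hconv.sub_le_inner_of_hasGradientAt (mem_univ (z t)) (mem_univ x₀) (hgrad (z t))
  unfold regularizedNewtonEnergy
  nlinarith [mul_nonneg hlam (sq_nonneg ‖z t - x₀‖), hx₀ (z t)]

end RegularizedNewton

theorem regularized_newton_value_estimates_general
    {H : Type*} [NormedAddCommGroup H] [InnerProductSpace ℝ H] [CompleteSpace H]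
    (f : H → ℝ) (f' : H → H)
    (hconv : ConvexOn ℝ Set.univ f)
    (hgrad : ∀ x, HasGradientAt f (f' x) x)
    (hmin : ∃ z, ∀ y, f z ≤ f y)
    (lam t0 : ℝ) (hlam : 0 < lam)
    (z z' v' : ℝ → H)
    (hz : ∀ t ∈ Ici t0, HasDerivAt z (z' t) t)
    (hv : ∀ t ∈ Ici t0, HasDerivAt (fun u => f' (z u)) (v' t) t)
    (heq : ∀ t ∈ Ici t0, lam • z' t + v' t + f' (z t) = 0) :
    IntegrableOn (fun t => f (z t) - ⨅ x, f x) (Ici t0) ∧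
    Tendsto (fun t => t * (f (z t) - ⨅ x, f x)) atTop (nhds 0) := by
  obtain ⟨x₀, hx₀⟩ := hmin
  rw [le_antisymm (ciInf_le ⟨f x₀, forall_mem_range.2 hx₀⟩ x₀) (le_ciInf hx₀)]
  have hgap : ∀ t ∈ Ici t0, HasDerivAt (fun u => f (z u) - f x₀) ⟪f' (z t), z' t⟫ t :=
    fun t ht => ((hgrad (z t)).comp_hasDerivAt (hz t ht)).sub_const _
  have hdesc : ∀ t ∈ Ici t0, ⟪f' (z t), z' t⟫ ≤ 0 := fun t ht =>
    inner_gradient_deriv_nonpos_of_regularizedNewton hconv hgrad hlam.le (hz t ht) (hv t ht)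
      (heq t ht)
  have hcont : ContinuousOn (fun u => f (z u) - f x₀) (Ici t0) := fun t ht =>
    (hgap t ht).continuousAt.continuousWithinAt
  have hgap₀ : ∀ t ∈ Ici t0, 0 ≤ f (z t) - f x₀ := fun t _ => sub_nonneg.2 (hx₀ _)
  have hint : IntegrableOn (fun u => f (z u) - f x₀) (Ici t0) :=
    integrableOn_Ici_of_le_neg_deriv hcont hgap₀
      (fun t ht => hasDerivAt_regularizedNewtonEnergy x₀ (hz t ht) (hv t ht) (heq t ht))
      (fun _ _ => regularizedNewtonEnergy_nonneg hconv hgrad hlam.le hx₀)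
      (fun t ht => by
        linarith [hdesc t ht,
          hconv.sub_le_inner_of_hasGradientAt (mem_univ (z t)) (mem_univ x₀) (hgrad (z t))])
  have hanti : AntitoneOn (fun u => f (z u) - f x₀) (Ici t0) := by
    refine antitoneOn_of_hasDerivWithinAt_nonpos (f' := fun t => ⟪f' (z t), z' t⟫)
      (convex_Ici t0) hcont (fun t ht => ?_) (fun t ht => ?_) <;> rw [interior_Ici] at ht
    exacts [(hgap t (mem_Ici_of_Ioi ht)).hasDerivWithinAt, hdesc t (mem_Ici_of_Ioi ht)]
  exact ⟨hint, hanti.tendsto_mul_zero_of_integrableOn hgap₀ hint⟩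

/-- Regularized Newton dynamics: integral estimate and o(1/t) convergence of the values. -/
theorem regularized_newton_value_estimates
    {H : Type*} [NormedAddCommGroup H] [InnerProductSpace ℝ H] [CompleteSpace H]
    (f : H → ℝ) (f' : H → H)
    (hconv : ConvexOn ℝ Set.univ f)
    (hgrad : ∀ x, HasGradientAt f (f' x) x)
    (hlip : ∀ s : Set H, Bornology.IsBounded s → ∃ K : NNReal, LipschitzOnWith K f' s)
    (hmin : ∃ z, ∀ y, f z ≤ f y)
    (lam t0 : ℝ) (hlam : 0 < lam) (ht0 : 0 < t0)
    (z z' v' : ℝ → H)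
    (hz : ∀ t ∈ Ici t0, HasDerivAt z (z' t) t)
    (hz'cont : ContinuousOn z' (Ici t0))
    (hv : ∀ t ∈ Ici t0, HasDerivAt (fun u => f' (z u)) (v' t) t)
    (heq : ∀ t ∈ Ici t0, lam • z' t + v' t + f' (z t) = 0) :
    IntegrableOn (fun t => f (z t) - ⨅ x, f x) (Ici t0) ∧
    Tendsto (fun t => t * (f (z t) - ⨅ x, f x)) atTop (nhds 0) :=
  regularized_newton_value_estimates_general f f' hconv hgrad hmin lam t0 hlam z z' v' hz hv heq
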